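/- Let G be a reaction network on species X and let ℰ ⊆ X be a set of independently conserved species, each closed in G. Let l ≥ 1. If for every choice of reaction rates the projected network G_{−ℰ} has at most l positive steady states in each stoichiometric compatibility class, then for every choice of reaction rates the open network G_{ℰ⇌0} has at most l positive steady states in each stoichiometric compatibility class. In particular, if G_{−ℰ} is monostationary with mass action kinetics, then so is G_{ℰ⇌0}. -/
import Mathlib


/-- A reaction `y → y'` is a pair of complexes, each a vector of
nonnegative integer coefficients indexed by the species: the source and the target. -/
abbrev Reaction (S : Type) : Type := (S → ℕ) × (S → ℕ)

section General

variable {S : Type} [Fintype S] [DecidableEq S]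

/-- The complex consisting of a single copy of species `s`. -/
def unitC (s : S) : S → ℕ := fun t => if t = s then 1 else 0

/-- The complex `a + b`. -/
def pairC (a b : S) : S → ℕ := fun t => (if t = a then 1 else 0) + (if t = b then 1 else 0)

/-- The mass action right-hand side `f_κ` of a network `R` with rates `κ`. -/
def massAction (R : Finset (Reaction S)) (κ : Reaction S → ℝ) (x : S → ℝ) : S → ℝ :=
  fun s => ∑ r ∈ R, κ r * (∏ t, x t ^ r.1 t) * ((r.2 s : ℝ) - (r.1 s : ℝ))

/-- The stoichiometric subspace of a network: the span of its reaction vectors. -/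
def stoichSubspace (R : Finset (Reaction S)) : Submodule ℝ (S → ℝ) :=
  Submodule.span ℝ ((fun r : Reaction S => fun s => ((r.2 s : ℝ) - (r.1 s : ℝ))) '' ↑R)

/-- A positive steady state of the mass action system `(R, κ)`. -/
def isPosSteadyState (R : Finset (Reaction S)) (κ : Reaction S → ℝ) (x : S → ℝ) : Prop :=
  (∀ s, 0 < x s) ∧ massAction R κ x = 0

/-- A steady state is nondegenerate if the kernel of the Jacobian of the mass action
right-hand side intersects the stoichiometric subspace trivially. -/
def nondegenerate (R : Finset (Reaction S)) (κ : Reaction S → ℝ) (x : S → ℝ) : Prop :=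
  ∀ v ∈ stoichSubspace R, fderiv ℝ (massAction R κ) x v = 0 → v = 0

/-- A network admits nondegenerate multistationarity if for some positive rates there are
two distinct nondegenerate positive steady states in the same stoichiometric
compatibility class. -/
def admitsNondegMultistationarity (R : Finset (Reaction S)) : Prop :=
  ∃ κ : Reaction S → ℝ, (∀ r ∈ R, 0 < κ r) ∧
    ∃ x y : S → ℝ, x ≠ y ∧
      isPosSteadyState R κ x ∧ isPosSteadyState R κ y ∧
      nondegenerate R κ x ∧ nondegenerate R κ y ∧
      y - x ∈ stoichSubspace R

/-- The inflow reaction `0 → s`. -/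
def inflow (s : S) : Reaction S := (fun _ => 0, unitC s)

/-- The outflow reaction `s → 0`. -/
def outflow (s : S) : Reaction S := (unitC s, fun _ => 0)

/-- The open network on `E`: add inflow and outflow reactions for every species of `E`. -/
def openOn (R : Finset (Reaction S)) (E : Finset S) : Finset (Reaction S) :=
  R ∪ E.image inflow ∪ E.image outflow

/-- A conservation law: a vector orthogonal to the stoichiometric subspace. -/
def conservationLaw (R : Finset (Reaction S)) (w : S → ℝ) : Prop :=
  ∀ v ∈ stoichSubspace R, ∑ s, w s * v s = 0

/-- A set `E` of species is independently conserved in `R` if there are conservation laws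
`L e` for `e ∈ E` such that `L e` has a nonzero coordinate at `e` and zero coordinate at
`e` for every other `L e'`, `e' ∈ E`. -/
def IndepConserved (R : Finset (Reaction S)) (E : Finset S) : Prop :=
  ∃ L : S → (S → ℝ), ∀ e ∈ E,
    conservationLaw R (L e) ∧ L e e ≠ 0 ∧ ∀ e' ∈ E, e' ≠ e → L e' e = 0

/-- A species is closed in `R` if neither its inflow nor its outflow is a reaction of `R`. -/
def ClosedIn (R : Finset (Reaction S)) (s : S) : Prop :=
  inflow s ∉ R ∧ outflow s ∉ R

/-- Projection of a complex onto the coordinates outside `E`. -/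
def projC (E : Finset S) (y : S → ℕ) : {s : S // s ∉ E} → ℕ := fun s => y s.val

/-- Projection of a reaction onto the coordinates outside `E`. -/
def projR (E : Finset S) (r : Reaction S) : Reaction {s : S // s ∉ E} :=
  (projC E r.1, projC E r.2)

/-- The projected network `G₋E` on the species outside `E`: project all reactions and
remove self-loops. -/
def projNet (R : Finset (Reaction S)) (E : Finset S) : Finset (Reaction {s : S // s ∉ E}) :=
  (R.image (projR E)).filter fun r => r.1 ≠ r.2

/-- Inclusion of a reaction on the species of `E` into a reaction on all of `S`. -/
def inclR (E : Finset S) (r : Reaction {s : S // s ∈ E}) : Reaction S :=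
  (fun s => if h : s ∈ E then r.1 ⟨s, h⟩ else 0,
   fun s => if h : s ∈ E then r.2 ⟨s, h⟩ else 0)

/-- `R` has at most `l` positive steady states in each stoichiometric compatibility class,
for every choice of positive reaction rates: there is no injective family of `l + 1`
positive steady states lying pairwise in the same compatibility class. -/
def atMostPosSS (R : Finset (Reaction S)) (l : ℕ) : Prop :=
  ∀ κ : Reaction S → ℝ, (∀ r ∈ R, 0 < κ r) →
    ∀ f : Fin (l + 1) → (S → ℝ),
      (∀ j, isPosSteadyState R κ (f j)) →
      (∀ j k, f k - f j ∈ stoichSubspace R) →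
      ¬ Function.Injective f

/-- Monostationarity: at most one positive steady state in each stoichiometric
compatibility class, for every choice of positive rates. -/
def monostationary (R : Finset (Reaction S)) : Prop :=
  atMostPosSS R 1

end General

/-- Species of the sequential `n`-site phosphorylation–dephosphorylation cycle:
the enzymes `E`, `F`, the substrates `S i` for `i = 0, …, n`, and the intermediates
`ES i` for `i = 0, …, n-1` and `FS i` (denoting `FS_{i+1}`) for `i = 0, …, n-1`. -/
inductive PS (n : ℕ) : Type
  | E : PS n
  | F : PS n
  | S : Fin (n + 1) → PS n
  | ES : Fin n → PS n
  | FS : Fin n → PS n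
deriving DecidableEq, Fintype

/-- The sequential `n`-site phosphorylation–dephosphorylation cycle `𝒫ⁿ`, with the `6n`
reactions `S_i + E ⇌ ES_i`, `ES_i → S_{i+1} + E` for `i = 0, …, n-1` and
`S_i + F ⇌ FS_i`, `FS_i → S_{i-1} + F` for `i = 1, …, n`. -/
def Pcycle (n : ℕ) : Finset (Reaction (PS n)) :=
  (Finset.univ.image fun i : Fin n => (pairC (PS.S i.castSucc) PS.E, unitC (PS.ES i))) ∪
  (Finset.univ.image fun i : Fin n => (unitC (PS.ES i), pairC (PS.S i.castSucc) PS.E)) ∪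
  (Finset.univ.image fun i : Fin n => (unitC (PS.ES i), pairC (PS.S i.succ) PS.E)) ∪
  (Finset.univ.image fun i : Fin n => (pairC (PS.S i.succ) PS.F, unitC (PS.FS i))) ∪
  (Finset.univ.image fun i : Fin n => (unitC (PS.FS i), pairC (PS.S i.succ) PS.F)) ∪
  (Finset.univ.image fun i : Fin n => (unitC (PS.FS i), pairC (PS.S i.castSucc) PS.F))

section Aux

variable {S : Type} [Fintype S] [DecidableEq S]

lemma unitC_injective : Function.Injective (unitC (S := S)) := by
  intro a b h
  by_contra hab
  have h2 := congrFun h a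
  simp [unitC, hab] at h2

lemma inflow_injective : Function.Injective (inflow (S := S)) := by
  intro a b h
  exact unitC_injective (congrArg Prod.snd h)

lemma outflow_injective : Function.Injective (outflow (S := S)) := by
  intro a b h
  exact unitC_injective (congrArg Prod.fst h)

lemma inflow_ne_outflow (a b : S) : inflow a ≠ outflow b := by
  intro h
  have h2 := congrFun (congrArg Prod.fst h) b
  simp [inflow, outflow, unitC] at h2

lemma inflow_mem_openOn {e : S} {E : Finset S} (he : e ∈ E) (R : Finset (Reaction S)) :
    inflow e ∈ openOn R E :=
  Finset.mem_union_left _ (Finset.mem_union_right _ (Finset.mem_image_of_mem _ he))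

lemma outflow_mem_openOn {e : S} {E : Finset S} (he : e ∈ E) (R : Finset (Reaction S)) :
    outflow e ∈ openOn R E :=
  Finset.mem_union_right _ (Finset.mem_image_of_mem _ he)

lemma mem_openOn_of_mem {r : Reaction S} {R : Finset (Reaction S)} (hr : r ∈ R) (E : Finset S) :
    r ∈ openOn R E :=
  Finset.mem_union_left _ (Finset.mem_union_left _ hr)

lemma sum_openOn {M : Type} [AddCommMonoid M] (R : Finset (Reaction S)) (E : Finset S)
    (hCl : ∀ e ∈ E, ClosedIn R e) (g : Reaction S → M) :
    ∑ r ∈ openOn R E, g r = ∑ r ∈ R, g r + ∑ e ∈ E, g (inflow e) + ∑ e ∈ E, g (outflow e) := by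
  have d1 : Disjoint R (E.image inflow) := by
    rw [Finset.disjoint_right]
    intro r hr
    obtain ⟨e, he, rfl⟩ := Finset.mem_image.mp hr
    exact (hCl e he).1
  have d2 : Disjoint (R ∪ E.image inflow) (E.image outflow) := by
    rw [Finset.disjoint_right]
    intro r hr
    obtain ⟨e, he, rfl⟩ := Finset.mem_image.mp hr
    intro hmem
    rcases Finset.mem_union.mp hmem with h' | h'
    · exact (hCl e he).2 h'
    · obtain ⟨e', _, heq⟩ := Finset.mem_image.mp h'
      exact inflow_ne_outflow e' e heq
  rw [openOn, Finset.sum_union d2, Finset.sum_union d1,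
      Finset.sum_image (fun a _ b _ h => inflow_injective h),
      Finset.sum_image (fun a _ b _ h => outflow_injective h)]

lemma prod_pow_unitC (x : S → ℝ) (e : S) : (∏ t, x t ^ unitC e t) = x e := by
  rw [Finset.prod_eq_single e (fun t _ ht => by simp [unitC, ht]) (by simp)]
  simp [unitC]

lemma massAction_mem_stoich (R : Finset (Reaction S)) (κ : Reaction S → ℝ) (x : S → ℝ) :
    massAction R κ x ∈ stoichSubspace R := by
  have hrw : massAction R κ x
      = ∑ r ∈ R, (κ r * ∏ t, x t ^ r.1 t) • (fun s => ((r.2 s : ℝ) - (r.1 s : ℝ))) := by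
    funext s
    simp [massAction, Finset.sum_apply, mul_assoc]
  rw [hrw]
  exact Submodule.sum_mem _ fun r hr =>
    Submodule.smul_mem _ _ (Submodule.subset_span ⟨r, Finset.mem_coe.mpr hr, rfl⟩)

lemma massAction_openOn_apply (R : Finset (Reaction S)) (E : Finset S)
    (hCl : ∀ e ∈ E, ClosedIn R e) (κ : Reaction S → ℝ) (x : S → ℝ) (s : S) :
    massAction (openOn R E) κ x s = massAction R κ x s
      + ∑ e ∈ E, (κ (inflow e) - κ (outflow e) * x e) * (unitC e s : ℝ) := by
  simp only [massAction]
  rw [sum_openOn R E hCl (fun r => κ r * (∏ t, x t ^ r.1 t) * ((r.2 s : ℝ) - (r.1 s : ℝ))),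
      add_assoc, ← Finset.sum_add_distrib]
  congr 1
  apply Finset.sum_congr rfl
  intro e _
  simp [inflow, outflow, prod_pow_unitC]
  ring

lemma massAction_openOn_notin (R : Finset (Reaction S)) (E : Finset S)
    (hCl : ∀ e ∈ E, ClosedIn R e) (κ : Reaction S → ℝ) (x : S → ℝ) {s : S} (hs : s ∉ E) :
    massAction (openOn R E) κ x s = massAction R κ x s := by
  rw [massAction_openOn_apply R E hCl κ x s, Finset.sum_eq_zero, add_zero]
  intro e he
  have hne : s ≠ e := fun h => hs (h ▸ he)
  simp [unitC, hne]

lemma coords_fixed (R : Finset (Reaction S)) (E : Finset S)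
    (hIC : IndepConserved R E) (hCl : ∀ e ∈ E, ClosedIn R e)
    (κ : Reaction S → ℝ) (hκ : ∀ r ∈ openOn R E, 0 < κ r)
    (x : S → ℝ) (hx : isPosSteadyState (openOn R E) κ x) :
    ∀ e ∈ E, x e = κ (inflow e) / κ (outflow e) := by
  obtain ⟨L, hL⟩ := hIC
  intro e he
  obtain ⟨hcons, hLne, _⟩ := hL e he
  have h0 : ∑ s, L e s * massAction (openOn R E) κ x s = 0 := by
    simp [hx.2]
  have h1 : ∑ s, L e s * massAction (openOn R E) κ x s
      = ∑ s, L e s * massAction R κ x s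
        + ∑ e' ∈ E, (κ (inflow e') - κ (outflow e') * x e') * L e e' := by
    simp only [massAction_openOn_apply R E hCl κ x, mul_add, Finset.sum_add_distrib,
      Finset.mul_sum]
    congr 1
    rw [Finset.sum_comm]
    apply Finset.sum_congr rfl
    intro e' _
    rw [Finset.sum_eq_single e' (fun t _ ht => by simp [unitC, ht]) (by simp)]
    simp [unitC]
    ring
  have hA : ∑ s, L e s * massAction R κ x s = 0 := hcons _ (massAction_mem_stoich R κ x)
  have hsum : ∑ e' ∈ E, (κ (inflow e') - κ (outflow e') * x e') * L e e'
      = (κ (inflow e) - κ (outflow e) * x e) * L e e := by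
    rw [Finset.sum_eq_single e]
    · intro e' he' hne'
      obtain ⟨_, _, hzero⟩ := hL e' he'
      rw [hzero e he (Ne.symm hne'), mul_zero]
    · intro hnot
      exact absurd he hnot
  have hzero2 : κ (inflow e) - κ (outflow e) * x e = 0 := by
    have h2 := h0
    rw [h1, hA, hsum, zero_add] at h2
    exact (mul_eq_zero.mp h2).resolve_right hLne
  have hκout := hκ _ (outflow_mem_openOn he R)
  rw [eq_div_iff (ne_of_gt hκout)]
  linear_combination -hzero2

lemma massAction_projNet (R : Finset (Reaction S)) (E : Finset S)
    (κ : Reaction S → ℝ) (c : S → ℝ)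
    (x : S → ℝ) (hxE : ∀ e ∈ E, x e = c e) (s : {s : S // s ∉ E}) :
    massAction (projNet R E)
      (fun r' => ∑ r ∈ R.filter (fun r => projR E r = r'), κ r * ∏ e ∈ E, (c e) ^ r.1 e)
      (fun u => x u.val) s
      = massAction R κ x s.val := by
  classical
  set F : Reaction S → ℝ := fun r =>
    κ r * (∏ e ∈ E, c e ^ r.1 e) * (∏ u : {s : S // s ∉ E}, x u.val ^ r.1 u.val)
      * ((r.2 s.val : ℝ) - (r.1 s.val : ℝ)) with hF
  have hprod : ∀ r : Reaction S,
      (∏ t, x t ^ r.1 t)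
        = (∏ e ∈ E, c e ^ r.1 e) * ∏ u : {s : S // s ∉ E}, x u.val ^ r.1 u.val := by
    intro r
    rw [← Finset.prod_mul_prod_compl E (fun t => x t ^ r.1 t)]
    congr 1
    · exact Finset.prod_congr rfl fun e he => by rw [hxE e he]
    · exact Finset.prod_subtype Eᶜ (fun t => Finset.mem_compl) (fun t => x t ^ r.1 t)
  have hRHS : massAction R κ x s.val = ∑ r ∈ R, F r := by
    simp only [massAction]
    apply Finset.sum_congr rfl
    intro r _
    rw [hprod r, hF]
    ring
  have hLHS : massAction (projNet R E)
      (fun r' => ∑ r ∈ R.filter (fun r => projR E r = r'), κ r * ∏ e ∈ E, (c e) ^ r.1 e)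
      (fun u => x u.val) s
      = ∑ r' ∈ projNet R E, ∑ r ∈ R.filter (fun r => projR E r = r'), F r := by
    simp only [massAction]
    apply Finset.sum_congr rfl
    intro r' _
    rw [Finset.sum_mul, Finset.sum_mul]
    apply Finset.sum_congr rfl
    intro r hr
    have hpr : projR E r = r' := (Finset.mem_filter.mp hr).2
    rw [← hpr, hF]
    rfl
  rw [hRHS, hLHS]
  rw [← Finset.sum_filter_add_sum_filter_not R (fun r => (projR E r).1 ≠ (projR E r).2) F]
  have hz : ∑ r ∈ R.filter (fun r => ¬ (projR E r).1 ≠ (projR E r).2), F r = 0 := by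
    apply Finset.sum_eq_zero
    intro r hr
    have hloop : (projR E r).1 = (projR E r).2 := not_not.mp (Finset.mem_filter.mp hr).2
    have h2 : (r.1 s.val : ℕ) = r.2 s.val := congrFun hloop s
    rw [hF]
    simp only
    rw [h2, sub_self, mul_zero]
  rw [hz, add_zero]
  have hfib : ∑ r' ∈ projNet R E,
      ∑ r ∈ (R.filter (fun r => (projR E r).1 ≠ (projR E r).2)).filter
        (fun r => projR E r = r'), F r
      = ∑ r ∈ R.filter (fun r => (projR E r).1 ≠ (projR E r).2), F r :=
    Finset.sum_fiberwise_of_maps_to (g := projR E)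
      (fun r hr => Finset.mem_filter.mpr
        ⟨Finset.mem_image_of_mem _ (Finset.mem_filter.mp hr).1, (Finset.mem_filter.mp hr).2⟩) F
  rw [← hfib]
  apply Finset.sum_congr rfl
  intro r' hr'
  apply Finset.sum_congr _ (fun _ _ => rfl)
  ext r
  simp only [Finset.mem_filter]
  constructor
  · intro ⟨hrR, hpr⟩
    exact ⟨⟨hrR, hpr ▸ (Finset.mem_filter.mp hr').2⟩, hpr⟩
  · intro ⟨⟨hrR, _⟩, hpr⟩
    exact ⟨hrR, hpr⟩

lemma stoich_proj (R : Finset (Reaction S)) (E : Finset S) :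
    ∀ v ∈ stoichSubspace (openOn R E),
      (LinearMap.funLeft ℝ ℝ (Subtype.val : {s : S // s ∉ E} → S)) v
        ∈ stoichSubspace (projNet R E) := by
  intro v hv
  have hle : stoichSubspace (openOn R E)
      ≤ (stoichSubspace (projNet R E)).comap
          (LinearMap.funLeft ℝ ℝ (Subtype.val : {s : S // s ∉ E} → S)) := by
    rw [stoichSubspace, Submodule.span_le]
    rintro w ⟨r, hr, rfl⟩
    simp only [SetLike.mem_coe, Submodule.mem_comap]
    rcases Finset.mem_union.mp hr with hr | hr
    · rcases Finset.mem_union.mp hr with hr | hr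
      · by_cases hloop : (projR E r).1 = (projR E r).2
        · have hz : (LinearMap.funLeft ℝ ℝ (Subtype.val : {s : S // s ∉ E} → S))
              (fun s => ((r.2 s : ℝ) - (r.1 s : ℝ))) = 0 := by
            funext u
            have h2 : (r.1 u.val : ℕ) = r.2 u.val := congrFun hloop u
            simp [LinearMap.funLeft, h2]
          rw [hz]
          exact Submodule.zero_mem _
        · apply Submodule.subset_span
          exact ⟨projR E r,
            Finset.mem_coe.mpr (Finset.mem_filter.mpr ⟨Finset.mem_image_of_mem _ hr, hloop⟩), rfl⟩
      · obtain ⟨e, he, rfl⟩ := Finset.mem_image.mp hr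
        have hz : (LinearMap.funLeft ℝ ℝ (Subtype.val : {s : S // s ∉ E} → S))
            (fun s => (((inflow e).2 s : ℝ) - ((inflow e).1 s : ℝ))) = 0 := by
          funext u
          have hne : u.val ≠ e := fun h => u.prop (h ▸ he)
          simp [LinearMap.funLeft, inflow, unitC, hne]
        rw [hz]
        exact Submodule.zero_mem _
    · obtain ⟨e, he, rfl⟩ := Finset.mem_image.mp hr
      have hz : (LinearMap.funLeft ℝ ℝ (Subtype.val : {s : S // s ∉ E} → S))
          (fun s => (((outflow e).2 s : ℝ) - ((outflow e).1 s : ℝ))) = 0 := by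
        funext u
        have hne : u.val ≠ e := fun h => u.prop (h ▸ he)
        simp [LinearMap.funLeft, outflow, unitC, hne]
      rw [hz]
      exact Submodule.zero_mem _
  exact hle hv

end Aux

/-- Let `E` be a set of independently conserved species, each closed in
`G`. If, for every choice of positive rates, the projected network `G₋E` has at most `l`
positive steady states in each stoichiometric compatibility class, then the same holds
for the open network `G_{E⇌0}` (in particular, if `G₋E` is monostationary then so is
`G_{E⇌0}`). -/
theorem open_network_inherits_bound {S : Type} [Fintype S] [DecidableEq S]
    (R : Finset (Reaction S)) (E : Finset S)
    (hIC : IndepConserved R E) (hCl : ∀ e ∈ E, ClosedIn R e)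
    (l : ℕ) (hl : 1 ≤ l)
    (h : atMostPosSS (projNet R E) l) :
    atMostPosSS (openOn R E) l := by
  intro κ hκ f hf hcomp hinj
  classical
  have hc : ∀ e ∈ E, 0 < κ (inflow e) / κ (outflow e) := fun e he =>
    div_pos (hκ _ (inflow_mem_openOn he R)) (hκ _ (outflow_mem_openOn he R))
  set c : S → ℝ := fun e => κ (inflow e) / κ (outflow e) with hcdef
  have hcoords : ∀ j, ∀ e ∈ E, f j e = c e := fun j =>
    coords_fixed R E hIC hCl κ hκ (f j) (hf j)
  refine h (fun r' => ∑ r ∈ R.filter (fun r => projR E r = r'), κ r * ∏ e ∈ E, (c e) ^ r.1 e)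
    ?_ (fun j u => f j u.val) ?_ ?_ ?_
  · intro r' hr'
    obtain ⟨hr'img, hloop⟩ := Finset.mem_filter.mp hr'
    obtain ⟨r, hrR, hrp⟩ := Finset.mem_image.mp hr'img
    apply Finset.sum_pos
    · intro r₀ hr₀
      exact mul_pos (hκ _ (mem_openOn_of_mem (Finset.mem_filter.mp hr₀).1 E))
        (Finset.prod_pos fun e he => pow_pos (hc e he) _)
    · exact ⟨r, Finset.mem_filter.mpr ⟨hrR, hrp⟩⟩
  · intro j
    refine ⟨fun u => (hf j).1 u.val, ?_⟩
    funext s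
    rw [massAction_projNet R E κ c (f j) (hcoords j) s]
    have h2 := congrFun (hf j).2 s.val
    rw [massAction_openOn_notin R E hCl κ (f j) s.prop] at h2
    simpa using h2
  · intro j k
    exact stoich_proj R E _ (hcomp j k)
  · intro j k hjk
    apply hinj
    funext s
    by_cases hs : s ∈ E
    · rw [hcoords j s hs, hcoords k s hs]
    · exact congrFun hjk ⟨s, hs⟩
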